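/- For odd n ≥ 3, the subgroup 𝒦 of SL(n,ℝ) generated by matrices of the form diag(1, B) and diag(B, 1) with B ∈ SL(n-1,ℝ) acts transitively on ℝ^n \ {0}. -/

import Mathlib

/-
For `m ≥ 2`, `SL(m, K)` is transitive on the nonzero vectors of `Kᵐ`: a transvection
`x ↦ x + (w ⬝ x) u` with `w ⬝ u = 0` has determinant `1`, and suitable ones move any nonzero
vector to a standard basis vector. As `n - 1 ≥ 2`, the matrices `diag(B, 1)` therefore move every
nonzero vector with vanishing last coordinate to `e₀`, while a matrix `diag(1, B)` moves any vector
whose last coordinate is nonzero to `x₀ e₀ + e₁`, whose last coordinate vanishes because `n ≥ 3`.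
So every nonzero vector lies in the `𝒦`-orbit of `e₀`.
-/

open Matrix

/-- Elements of SL(n,ℝ) of the form diag(1, B), B ∈ SL(n-1,ℝ). -/
def genSet1 (n : ℕ) (h : 1 + (n - 1) = n) : Set (Matrix.SpecialLinearGroup (Fin n) ℝ) :=
  {g | ∃ B : Matrix (Fin (n - 1)) (Fin (n - 1)) ℝ, B.det = 1 ∧
    (g : Matrix (Fin n) (Fin n) ℝ) =
      Matrix.reindex (finSumFinEquiv.trans (finCongr h)) (finSumFinEquiv.trans (finCongr h))
        (Matrix.fromBlocks 1 0 0 B)}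

/-- Elements of SL(n,ℝ) of the form diag(B, 1), B ∈ SL(n-1,ℝ). -/
def genSet2 (n : ℕ) (h : (n - 1) + 1 = n) : Set (Matrix.SpecialLinearGroup (Fin n) ℝ) :=
  {g | ∃ B : Matrix (Fin (n - 1)) (Fin (n - 1)) ℝ, B.det = 1 ∧
    (g : Matrix (Fin n) (Fin n) ℝ) =
      Matrix.reindex (finSumFinEquiv.trans (finCongr h)) (finSumFinEquiv.trans (finCongr h))
        (Matrix.fromBlocks B 0 0 1)}

namespace Matrix.SpecialLinearGroup

section CommRing

variable {R α β ι : Type*} [CommRing R] [Fintype α] [Fintype β] [Fintype ι]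
  [DecidableEq α] [DecidableEq β] [DecidableEq ι]

theorem exists_smul_eq_add_dotProduct_smul {u w : ι → R} (h : w ⬝ᵥ u = 0) :
    ∃ g : SpecialLinearGroup ι R, ∀ x, g • x = x + (w ⬝ᵥ x) • u := by
  refine ⟨⟨1 + vecMulVec u w, ?_⟩, fun x => ?_⟩
  · rw [vecMulVec_eq Unit, det_one_add_replicateCol_mul_replicateRow, h, add_zero]
  · change (1 + vecMulVec u w) *ᵥ x = _
    rw [add_mulVec, one_mulVec, vecMulVec_mulVec, op_smul_eq_smul]

def blockDiag (e : α ⊕ β ≃ ι) (A : SpecialLinearGroup α R) (D : SpecialLinearGroup β R) :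
    SpecialLinearGroup ι R :=
  ⟨reindex e e (fromBlocks A 0 0 D), by
    rw [det_reindex_self, det_fromBlocks_zero₂₁, A.2, D.2, one_mul]⟩

theorem blockDiag_smul_apply (e : α ⊕ β ≃ ι) (A : SpecialLinearGroup α R)
    (D : SpecialLinearGroup β R) (x : ι → R) (c : α ⊕ β) :
    (blockDiag e A D • x) (e c) = Sum.elim (A • (x ∘ e ∘ Sum.inl)) (D • (x ∘ e ∘ Sum.inr)) c := by
  change (reindex e e (fromBlocks (A : Matrix α α R) 0 0 D) *ᵥ x) (e c) = _
  rw [reindex_apply, submatrix_mulVec_equiv, Equiv.symm_symm, fromBlocks_mulVec]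
  cases c <;> simp [Function.comp_assoc, SpecialLinearGroup.smul_def]

end CommRing

section Field

variable {K α β ι : Type*} [Field K] [Fintype α] [Fintype β] [Fintype ι]
  [DecidableEq α] [DecidableEq β] [DecidableEq ι]

theorem exists_smul_eq_single_of_apply_ne_zero {x : ι → K} {i j : ι} (hji : j ≠ i)
    (hxj : x j ≠ 0) : ∃ g : SpecialLinearGroup ι K, g • x = Pi.single i 1 := by
  -- `w ⬝ x = w ⬝ eᵢ = 1`, so the transvection along `eᵢ - x` sends `x` to `eᵢ`
  set w : ι → K := Pi.single i 1 + Pi.single j ((1 - x i) / x j)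
  have hwx : w ⬝ᵥ x = 1 := by
    simp only [w, add_dotProduct, single_dotProduct, one_mul]
    field_simp
    ring
  have hwu : w ⬝ᵥ (Pi.single i 1 - x) = 0 := by
    simp [w, dotProduct_sub, hwx, hji]
  obtain ⟨g, hg⟩ := exists_smul_eq_add_dotProduct_smul hwu
  exact ⟨g, by rw [hg, hwx, one_smul, add_sub_cancel]⟩

theorem exists_smul_eq_single [Nontrivial ι] {x : ι → K} (hx : x ≠ 0) (i : ι) :
    ∃ g : SpecialLinearGroup ι K, g • x = Pi.single i 1 := by
  by_cases hoff : ∃ j ≠ i, x j ≠ 0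
  · obtain ⟨j, hji, hxj⟩ := hoff
    exact exists_smul_eq_single_of_apply_ne_zero hji hxj
  push Not at hoff
  have hxi : x i ≠ 0 := fun hxi => hx (funext fun j => by
    rcases eq_or_ne j i with rfl | hji
    · exact hxi
    · exact hoff j hji)
  -- `x` is a multiple of `eᵢ`: first make its `k`-th coordinate nonzero
  obtain ⟨k, hki⟩ := exists_ne i
  obtain ⟨g₁, hg₁⟩ := exists_smul_eq_add_dotProduct_smul
    (u := Pi.single k (1 : K)) (w := Pi.single i 1) (by simp [hki])
  have hk : (g₁ • x) k ≠ 0 := by simpa [hg₁, hoff k hki, hki] using hxi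
  obtain ⟨g₂, hg₂⟩ := exists_smul_eq_single_of_apply_ne_zero hki hk
  exact ⟨g₂ * g₁, by rw [mul_smul, hg₂]⟩

theorem exists_smul_eq [Nontrivial ι] {x y : ι → K} (hx : x ≠ 0) (hy : y ≠ 0) :
    ∃ g : SpecialLinearGroup ι K, g • x = y := by
  obtain ⟨i⟩ : Nonempty ι := inferInstance
  obtain ⟨gx, hgx⟩ := exists_smul_eq_single hx i
  obtain ⟨gy, hgy⟩ := exists_smul_eq_single hy i
  exact ⟨gy⁻¹ * gx, by rw [mul_smul, hgx, ← hgy, inv_smul_smul]⟩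

theorem exists_blockDiag_one_smul_eq [Nontrivial β] (e : α ⊕ β ≃ ι) {x y : ι → K}
    (hxy : x ∘ e ∘ Sum.inl = y ∘ e ∘ Sum.inl) (hx : x ∘ e ∘ Sum.inr ≠ 0)
    (hy : y ∘ e ∘ Sum.inr ≠ 0) : ∃ D : SpecialLinearGroup β K, blockDiag e 1 D • x = y := by
  obtain ⟨D, hD⟩ := exists_smul_eq hx hy
  refine ⟨D, funext <| e.surjective.forall.2 ?_⟩
  rintro (a | b)
  · simpa [blockDiag_smul_apply] using congrFun hxy a
  · simpa [blockDiag_smul_apply] using congrFun hD b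

theorem exists_blockDiag_smul_one_eq [Nontrivial α] (e : α ⊕ β ≃ ι) {x y : ι → K}
    (hxy : x ∘ e ∘ Sum.inr = y ∘ e ∘ Sum.inr) (hx : x ∘ e ∘ Sum.inl ≠ 0)
    (hy : y ∘ e ∘ Sum.inl ≠ 0) : ∃ A : SpecialLinearGroup α K, blockDiag e A 1 • x = y := by
  obtain ⟨A, hA⟩ := exists_smul_eq hx hy
  refine ⟨A, funext <| e.surjective.forall.2 ?_⟩
  rintro (a | b)
  · simpa [blockDiag_smul_apply] using congrFun hA a
  · simpa [blockDiag_smul_apply] using congrFun hxy b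

end Field

end Matrix.SpecialLinearGroup

theorem Equiv.comp_inl_ne_zero_of_comp_inr_eq_zero {α β ι M : Type*} [Zero M]
    (e : α ⊕ β ≃ ι) {x : ι → M} (hx : x ≠ 0) (h : x ∘ e ∘ Sum.inr = 0) :
    x ∘ e ∘ Sum.inl ≠ 0 := by
  intro h'
  refine hx (funext <| e.surjective.forall.2 ?_)
  rintro (a | b)
  · exact congrFun h' a
  · exact congrFun h b

open Matrix.SpecialLinearGroup

theorem exists_mem_genSet2_smul_eq_single {n : ℕ} (hn : 3 ≤ n) {x : Fin n → ℝ} (hx : x ≠ 0)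
    (hlast : x ⟨n - 1, by omega⟩ = 0) :
    ∃ g ∈ genSet2 n (Nat.sub_add_cancel (by omega)), g • x = Pi.single ⟨0, by omega⟩ 1 := by
  have : Nontrivial (Fin (n - 1)) := Fin.nontrivial_iff_two_le.2 (by omega)
  set e : Fin (n - 1) ⊕ Fin 1 ≃ Fin n :=
    finSumFinEquiv.trans (finCongr (Nat.sub_add_cancel (by omega)))
  have he_inl : ∀ a : Fin (n - 1), e (.inl a) = ⟨a, by omega⟩ := fun a => Fin.ext (by simp [e])
  have he_inr : ∀ b, e (.inr b) = ⟨n - 1, by omega⟩ :=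
    fun b => Fin.ext (by simp [e, Fin.fin_one_eq_zero b])
  have htail : ∀ z : Fin n → ℝ, z ⟨n - 1, by omega⟩ = 0 → z ∘ e ∘ Sum.inr = 0 :=
    fun z hz => funext fun b => by simp only [Function.comp_apply, he_inr, hz, Pi.zero_apply]
  obtain ⟨A, hA⟩ := exists_blockDiag_smul_one_eq e (x := x) (y := Pi.single ⟨0, by omega⟩ 1)
    ((htail x hlast).trans (htail _ (by simp [Pi.single_apply]; omega)).symm)
    (e.comp_inl_ne_zero_of_comp_inr_eq_zero hx (htail x hlast))
    (fun h => by simpa [he_inl] using congrFun h ⟨0, by omega⟩)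
  exact ⟨_, ⟨A, A.2, rfl⟩, hA⟩

theorem exists_mem_closure_smul_eq_single {n : ℕ} (hn : 3 ≤ n) {x : Fin n → ℝ} (hx : x ≠ 0) :
    ∃ g ∈ Subgroup.closure
        (genSet1 n (Nat.add_sub_of_le (by omega)) ∪ genSet2 n (Nat.sub_add_cancel (by omega))),
      g • x = Pi.single ⟨0, by omega⟩ 1 := by
  by_cases hlast : x ⟨n - 1, by omega⟩ = 0
  · obtain ⟨g, hg, hgx⟩ := exists_mem_genSet2_smul_eq_single hn hx hlast
    exact ⟨g, Subgroup.subset_closure (Or.inr hg), hgx⟩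
  have : Nontrivial (Fin (n - 1)) := Fin.nontrivial_iff_two_le.2 (by omega)
  set e : Fin 1 ⊕ Fin (n - 1) ≃ Fin n :=
    finSumFinEquiv.trans (finCongr (Nat.add_sub_of_le (by omega)))
  have he_inl : ∀ a, e (.inl a) = ⟨0, by omega⟩ :=
    fun a => Fin.ext (by simp [e, Fin.fin_one_eq_zero a])
  have he_inr : ∀ b : Fin (n - 1), e (.inr b) = ⟨b + 1, by omega⟩ :=
    fun b => Fin.ext (by simp [e]; omega)
  set q : Fin n → ℝ := Pi.single ⟨0, by omega⟩ (x ⟨0, by omega⟩) + Pi.single ⟨1, by omega⟩ 1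
  have hq₀ : q ⟨0, by omega⟩ = x ⟨0, by omega⟩ := by simp [q]
  have hq₁ : q ⟨1, by omega⟩ = 1 := by simp [q]
  have hq_last : q ⟨n - 1, by omega⟩ = 0 := by
    simp [q, show n - 1 ≠ 0 by omega, show n ≠ 2 by omega]
  have hx_tail : x (e (.inr ⟨n - 2, by omega⟩)) ≠ 0 := by
    rw [he_inr]
    convert hlast using 3
    dsimp only
    omega
  obtain ⟨D, hD⟩ := exists_blockDiag_one_smul_eq e (x := x) (y := q)
    (funext fun a => by simp [he_inl, hq₀])
    (fun h => hx_tail (congrFun h _))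
    (fun h => by simpa [he_inr, hq₁] using congrFun h ⟨0, by omega⟩)
  obtain ⟨g, hg, hgq⟩ := exists_mem_genSet2_smul_eq_single hn (x := q)
    (fun h => by simpa [hq₁] using congrFun h ⟨1, by omega⟩) hq_last
  refine ⟨g * blockDiag e 1 D, mul_mem (Subgroup.subset_closure (Or.inr hg))
    (Subgroup.subset_closure (Or.inl ⟨D, D.2, rfl⟩)), ?_⟩
  rw [mul_smul, hD, hgq]

/-- For odd n ≥ 3, the subgroup 𝒦 of SL(n,ℝ) generated by the matrices
diag(1, B) and diag(B, 1), B ∈ SL(n-1,ℝ), acts transitively on ℝⁿ \ {0}. -/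
theorem gen_transitive (n : ℕ) (hn : 3 ≤ n)
    (x y : Fin n → ℝ) (hx : x ≠ 0) (hy : y ≠ 0) :
    ∃ g ∈ Subgroup.closure (genSet1 n (by omega) ∪ genSet2 n (by omega)),
      (g : Matrix (Fin n) (Fin n) ℝ) *ᵥ x = y := by
  obtain ⟨gx, hgx, hgxx⟩ := exists_mem_closure_smul_eq_single hn hx
  obtain ⟨gy, hgy, hgyy⟩ := exists_mem_closure_smul_eq_single hn hy
  exact ⟨gy⁻¹ * gx, mul_mem (inv_mem hgy) hgx, by
    change (gy⁻¹ * gx) • x = y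
    rw [mul_smul, hgxx, ← hgyy, inv_smul_smul]⟩
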